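/- arXiv:1904.10067 — 2 statements merged into one kernel-verified Lean document; each statement's English description precedes it below -/
import Mathlib

section
/- Let R be a finite type of n replicas, let F ⊆ R be the set of faulty replicas, and let S, T ⊆ R be two quorums. If (|S| : ℝ) ≥ q_c · n, (|T| : ℝ) ≥ q_r · n, and (|F| : ℝ) < (q_c + q_r − 1) · n for real parameters q_c, q_r, then there exists a replica r ∈ S ∩ T with r ∉ F, i.e., the two quorums intersect in at least one honest replica (Flexible Quorum Intersection). -/
open Finset

theorem Finset.card_add_card_le_card_inter_add_card_univ {α : Type*} [Fintype α] [DecidableEq α]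
    (s t : Finset α) : #s + #t ≤ #(s ∩ t) + Fintype.card α := by
  rw [← card_union_add_card_inter, add_comm]
  exact Nat.add_le_add_left (card_le_univ _) _

/-- Flexible Quorum Intersection: a `q_c`-quorum and a `q_r`-quorum intersect
in at least one honest replica when the faulty fraction is below
`q_c + q_r - 1`. -/
theorem flexible_quorum_intersection
    {R : Type*} [Fintype R] [DecidableEq R]
    (n : ℕ) (hn : Fintype.card R = n)
    (F S T : Finset R) (q_c q_r : ℝ)
    (hS : (S.card : ℝ) ≥ q_c * n)
    (hT : (T.card : ℝ) ≥ q_r * n)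
    (hF : (F.card : ℝ) < (q_c + q_r - 1) * n) :
    ∃ r ∈ S ∩ T, r ∉ F := by
  have hST : (S.card : ℝ) + T.card ≤ (S ∩ T).card + n := by
    rw [← hn]
    exact_mod_cast card_add_card_le_card_inter_add_card_univ S T
  have hFST : F.card < (S ∩ T).card := by
    have : (F.card : ℝ) < (S ∩ T).card := by linarith
    exact_mod_cast this
  simpa using exists_mem_notMem_of_card_lt_card hFST
end

section
/- Let R be a finite type of n replicas, V a type of values, and vote : R → V → Prop a voting relation in a single view. Let F ⊆ R be the faulty replicas and suppose every honest replica votes for at most one value: for all r ∉ F and all values v, w, if vote r v and vote r w then v = w. Suppose there are Finsets S, T ⊆ R with every member of S voting for value b and every member of T voting for value b', with (|S| : ℝ) ≥ q_c · n, (|T| : ℝ) ≥ q_r · n, and (|F| : ℝ) < (q_c + q_r − 1) · n. Then b = b'. (Within a view, a value receiving q_c votes excludes any conflicting value from being certified with q_r votes.) -/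
open Finset

theorem Finset.exists_mem_mem_notMem_of_card_add_card_lt {α : Type*} [Fintype α]
    {S T F : Finset α} (h : #F + Fintype.card α < #S + #T) : ∃ r ∈ S, r ∈ T ∧ r ∉ F := by
  classical
  have hoverlap : #F < #(S ∩ T) := by
    have := card_union_add_card_inter S T
    have := card_le_univ (S ∪ T)
    omega
  obtain ⟨r, hr, hrF⟩ := exists_mem_notMem_of_card_lt_card hoverlap
  exact ⟨r, (mem_inter.mp hr).1, (mem_inter.mp hr).2, hrF⟩

theorem unique_certified_value_general
    {R : Type*} [Fintype R] {V : Type*}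
    (n : ℕ) (hn : Fintype.card R = n)
    (vote : R → V → Prop)
    (F : Finset R)
    (honest_votes_once : ∀ r : R, r ∉ F → ∀ v w : V, vote r v → vote r w → v = w)
    (b b' : V) (S T : Finset R)
    (hSvote : ∀ r ∈ S, vote r b)
    (hTvote : ∀ r ∈ T, vote r b')
    (q_c q_r : ℝ)
    (hS : (S.card : ℝ) ≥ q_c * n)
    (hT : (T.card : ℝ) ≥ q_r * n)
    (hF : (F.card : ℝ) < (q_c + q_r - 1) * n) :
    b = b' := by
  have hquorums : #F + Fintype.card R < #S + #T := by
    rw [hn]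
    exact_mod_cast (by linarith : (#F : ℝ) + n < #S + #T)
  obtain ⟨r, hrS, hrT, hrF⟩ := exists_mem_mem_notMem_of_card_add_card_lt hquorums
  exact honest_votes_once r hrF b b' (hSvote r hrS) (hTvote r hrT)

/-- Within a view, a value receiving `q_c · n` votes excludes any conflicting
value from being certified with `q_r · n` votes, when the faulty fraction is
below `q_c + q_r - 1` and honest replicas vote for at most one value. -/
theorem unique_certified_value
    {R : Type*} [Fintype R] [DecidableEq R] {V : Type*}
    (n : ℕ) (hn : Fintype.card R = n)
    (vote : R → V → Prop)
    (F : Finset R)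
    (honest_votes_once : ∀ r : R, r ∉ F → ∀ v w : V, vote r v → vote r w → v = w)
    (b b' : V) (S T : Finset R)
    (hSvote : ∀ r ∈ S, vote r b)
    (hTvote : ∀ r ∈ T, vote r b')
    (q_c q_r : ℝ)
    (hS : (S.card : ℝ) ≥ q_c * n)
    (hT : (T.card : ℝ) ≥ q_r * n)
    (hF : (F.card : ℝ) < (q_c + q_r - 1) * n) :
    b = b' :=
  unique_certified_value_general n hn vote F honest_votes_once b b' S T hSvote hTvote q_c q_r hS hT
    hF
end
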